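/- arXiv:1604.02984 — 5 statements merged into one kernel-verified Lean document; each statement's English description precedes it below -/
import Mathlib

section
/- For nonnegative integers M, define the (M+1)×(M+1) tridiagonal matrix A_M (indices 0..M) by a_{k,k} = 2(k+1)(M+1-k) - M - 2, a_{k-1,k} = k((k+1)(M+2-k) - M - 2), and a_{k,k-1} = M+1-k. Then det(λI - A_M) = ∏_{j=0}^{M} (λ - j(j+1)). -/
/-!
Let `N` be the lower shift matrix and `L = exp (-N)`, with entries `ℓ (i - j)` where
`ℓ d = (-1)^d / d!`. Then `A_M L = L T` for the upper bidiagonal matrix `T` with diagonal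
`j (j + 1)` and superdiagonal `j^2 (M + 1 - j)`. Extending `ℓ` by zero to negative integers, each
entry of this identity is a linear combination of two instances of the recurrence
`d ℓ d + ℓ (d - 1) = 0`, which holds for every integer `d`; the boundary rows and columns need no
separate treatment because the coefficients of the missing terms vanish there. As `L` is
unitriangular, `A_M` is similar to `T`, whose characteristic polynomial is read off its diagonal.
-/

open Polynomial Finset

/-- The tridiagonal matrix `A_M` of size `(M+1) × (M+1)`. -/
noncomputable def A (M : ℕ) : Matrix (Fin (M+1)) (Fin (M+1)) ℝ := fun i j =>
  if (i : ℕ) = (j : ℕ) then 2*(((i:ℕ):ℝ)+1)*((M:ℝ)+1-((i:ℕ):ℝ)) - M - 2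
  else if (i : ℕ) + 1 = (j : ℕ) then
    ((j:ℕ):ℝ)*((((j:ℕ):ℝ)+1)*((M:ℝ)+2-((j:ℕ):ℝ)) - M - 2)
  else if (j : ℕ) + 1 = (i : ℕ) then (M:ℝ)+1-((i:ℕ):ℝ)
  else 0

open Matrix

noncomputable def expNegCoeff (d : ℤ) : ℝ :=
  if 0 ≤ d then (-1) ^ d.toNat / (d.toNat.factorial : ℝ) else 0

lemma expNegCoeff_zero : expNegCoeff 0 = 1 := by
  simp [expNegCoeff]

lemma expNegCoeff_of_neg {d : ℤ} (hd : d < 0) : expNegCoeff d = 0 :=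
  if_neg (by omega)

lemma mul_expNegCoeff_add_expNegCoeff_sub_one (d : ℤ) :
    d * expNegCoeff d + expNegCoeff (d - 1) = 0 := by
  rcases lt_or_ge 0 d with hd | hd
  · obtain ⟨n, rfl⟩ : ∃ n : ℕ, d = n + 1 := ⟨d.toNat - 1, by omega⟩
    have hn : (n : ℤ) + 1 - 1 = n := by ring
    simp only [expNegCoeff, hn, if_pos hd.le, if_pos (Int.natCast_nonneg n), Int.toNat_natCast,
      show ((n : ℤ) + 1).toNat = n + 1 by omega, Nat.factorial_succ]
    push_cast
    field_simp
    ring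
  · rw [expNegCoeff_of_neg (by omega : d - 1 < 0)]
    rcases hd.lt_or_eq with hd | rfl
    · simp [expNegCoeff_of_neg hd]
    · simp

lemma Fin.sum_ite_intCast_eq {R : Type*} [AddCommMonoid R] {n : ℕ} (c : ℤ) (g : ℤ → R)
    (hg : c < 0 ∨ n ≤ c → g c = 0) :
    ∑ k : Fin n, (if (k : ℤ) = c then g k else 0) = g c := by
  by_cases hc : 0 ≤ c ∧ c < n
  · obtain ⟨m, rfl⟩ : ∃ m : ℕ, c = m := ⟨c.toNat, by omega⟩
    rw [Finset.sum_eq_single ⟨m, by omega⟩]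
    · simp
    · intro k _ hk
      rw [if_neg]
      exact fun h => hk (Fin.ext (by exact_mod_cast h))
    · simp
  · rw [hg (by omega)]
    exact Finset.sum_eq_zero fun k _ => if_neg (by omega)

noncomputable def expNegShift (M : ℕ) : Matrix (Fin (M+1)) (Fin (M+1)) ℝ := fun i j =>
  expNegCoeff ((i : ℤ) - j)

noncomputable def triangularA (M : ℕ) : Matrix (Fin (M+1)) (Fin (M+1)) ℝ := fun i j =>
  if (j : ℕ) = i then ((j : ℕ) : ℝ) * ((j : ℕ) + 1)
  else if (j : ℕ) = i + 1 then ((j : ℕ) : ℝ) ^ 2 * (M + 1 - (j : ℕ))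
  else 0

lemma A_apply_eq_sum_ite (M : ℕ) (i k : Fin (M+1)) :
    A M i k = (if (k : ℤ) = i - 1 then (M + 1 - (i : ℝ)) else 0)
      + (if (k : ℤ) = i then 2 * ((i : ℝ) + 1) * (M + 1 - i) - M - 2 else 0)
      + (if (k : ℤ) = i + 1 then ((i : ℝ) + 1) * (((i : ℝ) + 2) * (M + 1 - i) - M - 2) else 0) := by
  unfold A
  split_ifs <;> first | omega | ring1 | (rw [← ‹(i : ℕ) + 1 = k›]; push_cast; ring)

lemma triangularA_apply_eq_sum_ite (M : ℕ) (k j : Fin (M+1)) :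
    triangularA M k j = (if (k : ℤ) = j then ((j : ℝ) * (j + 1)) else 0)
      + (if (k : ℤ) = j - 1 then (j : ℝ) ^ 2 * (M + 1 - j) else 0) := by
  unfold triangularA
  split_ifs <;> first | omega | simp

lemma A_mul_apply {n : Type*} (M : ℕ) (B : Matrix (Fin (M+1)) n ℝ) (f : ℤ → n → ℝ)
    (hB : ∀ k j, B k j = f k j) (hf : ∀ j, f (-1) j = 0) (i : Fin (M+1)) (j : n) :
    (A M * B) i j = (M + 1 - (i : ℝ)) * f (i - 1) j
      + (2 * ((i : ℝ) + 1) * (M + 1 - i) - M - 2) * f i j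
      + ((i : ℝ) + 1) * (((i : ℝ) + 2) * (M + 1 - i) - M - 2) * f (i + 1) j := by
  simp only [Matrix.mul_apply, A_apply_eq_sum_ite, hB]
  rw [Finset.sum_congr rfl fun k _ => by rw [add_mul, add_mul]]
  simp only [Finset.sum_add_distrib, ite_mul, zero_mul]
  rw [Fin.sum_ite_intCast_eq _ (fun x => _ * f x j), Fin.sum_ite_intCast_eq _ (fun x => _ * f x j),
    Fin.sum_ite_intCast_eq _ (fun x => _ * f x j)]
  · intro h
    have hiM : ((i : ℕ) : ℝ) = M := by exact_mod_cast (by omega : (i : ℕ) = M)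
    rw [hiM]
    ring
  · omega
  · intro h
    rw [show (i : ℤ) - 1 = -1 by omega, hf, mul_zero]

lemma mul_triangularA_apply {m : Type*} (M : ℕ) (B : Matrix m (Fin (M+1)) ℝ) (g : m → ℤ → ℝ)
    (hB : ∀ i k, B i k = g i k) (i : m) (j : Fin (M+1)) :
    (B * triangularA M) i j = g i j * ((j : ℝ) * (j + 1))
      + g i (j - 1) * ((j : ℝ) ^ 2 * (M + 1 - j)) := by
  simp only [Matrix.mul_apply, triangularA_apply_eq_sum_ite, hB]
  rw [Finset.sum_congr rfl fun k _ => by rw [mul_add]]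
  simp only [Finset.sum_add_distrib, mul_ite, mul_zero]
  rw [Fin.sum_ite_intCast_eq _ (fun x => g i x * _), Fin.sum_ite_intCast_eq _ (fun x => g i x * _)]
  · intro h
    have hj : ((j : ℕ) : ℝ) = 0 := by exact_mod_cast (by omega : (j : ℕ) = 0)
    rw [hj]
    ring
  · omega

theorem A_mul_expNegShift (M : ℕ) : A M * expNegShift M = expNegShift M * triangularA M := by
  ext i j
  rw [A_mul_apply M (expNegShift M) (fun k j => expNegCoeff (k - j)) (fun _ _ => rfl)
      (fun j => expNegCoeff_of_neg (by omega)),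
    mul_triangularA_apply M (expNegShift M) (fun i k => expNegCoeff (i - k)) (fun _ _ => rfl)]
  have r₀ := mul_expNegCoeff_add_expNegCoeff_sub_one ((i : ℤ) - j)
  have r₁ := mul_expNegCoeff_add_expNegCoeff_sub_one ((i : ℤ) + 1 - j)
  rw [show (i : ℤ) + 1 - j - 1 = i - j by ring] at r₁
  rw [show (i : ℤ) - 1 - j = i - j - 1 by ring, show (i : ℤ) - (j - 1) = i + 1 - j by ring]
  push_cast at r₀ r₁
  -- the coefficient of `r₁` is forced by the `ℓ (i - j)` terms; the `ℓ (i + 1 - j)` terms then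
  -- agree by a polynomial identity in `i`, `j`, `M`
  linear_combination (M + 1 - (i : ℝ)) * r₀
    + (2 * ((i : ℝ) + 1) * (M + 1 - i) - M - 2 - j * (j + 1) - (M + 1 - i) * (i - j)) * r₁

lemma expNegShift_isLowerTriangular (M : ℕ) : (expNegShift M).IsLowerTriangular := by
  intro i j h
  exact expNegCoeff_of_neg (by rw [OrderDual.toDual_lt_toDual, Fin.lt_def] at h; omega)

lemma det_expNegShift (M : ℕ) : (expNegShift M).det = 1 := by
  rw [det_of_isLowerTriangular _ (expNegShift_isLowerTriangular M)]
  simp [expNegShift, expNegCoeff_zero]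

lemma triangularA_isUpperTriangular (M : ℕ) : (triangularA M).IsUpperTriangular := by
  intro i j h
  rw [id, id, Fin.lt_def] at h
  simp only [triangularA]
  rw [if_neg (by omega), if_neg (by omega)]

/-- `det (λ I - A_M) = ∏_{j=0}^{M} (λ - j(j+1))`. -/
theorem charpoly_A (M : ℕ) :
    (A M).charpoly = ∏ j ∈ Finset.range (M+1), (X - C ((j : ℝ) * ((j : ℝ)+1))) := by
  have hL : IsUnit (expNegShift M).det := by
    rw [det_expNegShift]
    exact isUnit_one
  have hA : A M = expNegShift M * (triangularA M * (expNegShift M)⁻¹) := by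
    rw [← Matrix.mul_assoc, ← A_mul_expNegShift, mul_nonsing_inv_cancel_right _ _ hL]
  rw [hA, charpoly_mul_comm, nonsing_inv_mul_cancel_right _ _ hL,
    charpoly_of_isUpperTriangular _ (triangularA_isUpperTriangular M),
    ← Fin.prod_univ_eq_prod_range (fun j => X - C ((j : ℝ) * ((j : ℝ) + 1)))]
  simp [triangularA]
end

section
/- The matrix A_M has exactly M+1 distinct eigenvalues, namely k(k+1) for k = 0, 1, ..., M, and each eigenvalue is simple (its eigenspace is one-dimensional). -/
open Finset

/-!
The superdiagonal entries of `A_M` are `j²(M+1-j) ≠ 0`, so an eigenvector is determined by its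
first coordinate and every eigenspace has dimension at most one.

Conjugating `A_M` by `diag((-1)^x / x!)` gives the difference operator
`L f(x) = (x+1)(M-x)(f x - f(x+1)) + x(M+1-x)(f x - f(x-1))` of the Hahn polynomials with
`α = β = 0`. On the binomials `C(x, s)` it acts bidiagonally,
`L C(·,s) = s(s+1) C(·,s) - s(M+1-s) C(·,s-1)`, so the Hahn polynomial `Q_k` satisfies
`L Q_k = k(k+1) Q_k`. These `M+1` eigenvalues are distinct, so an eigenvector for any further
eigenvalue would give `M+2` linearly independent vectors.
-/

namespace Matrix

variable {R : Type*}

def tridiag [Zero R] (n : ℕ) (a b c : ℕ → R) : Matrix (Fin (n+1)) (Fin (n+1)) R := fun i j =>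
  if (i : ℕ) = j then a i else if (i : ℕ) + 1 = j then b j else if (j : ℕ) + 1 = i then c i else 0

theorem tridiag_mulVec_apply [NonAssocSemiring R] (n : ℕ) (a b c v : ℕ → R) (i : Fin (n+1)) :
    (tridiag n a b c *ᵥ fun j => v j) i =
      (if (i : ℕ) = 0 then 0 else c i * v (i - 1)) + a i * v i +
        (if (i : ℕ) < n then b (i + 1) * v (i + 1) else 0) := by
  obtain ⟨i, hi⟩ := i
  have hsplit : ∀ m : ℕ, (if i = m then a i else if i + 1 = m then b m else
      if m + 1 = i then c i else 0) * v m =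
      (if m = i then a i * v i else 0) + (if m = i + 1 then b (i + 1) * v (i + 1) else 0) +
        (if m + 1 = i then c i * v m else 0) := by
    intro m; split_ifs <;> first | omega | (subst_vars; simp)
  simp only [mulVec, dotProduct, tridiag]
  rw [Fin.sum_univ_eq_sum_range (fun m => (if i = m then a i else if i + 1 = m then b m else
      if m + 1 = i then c i else 0) * v m)]
  simp only [hsplit, sum_add_distrib, sum_ite_eq', mem_range]
  rcases i with _ | p
  · simp
  · simp [show p < n by omega, show p ≤ n by omega]
    abel

theorem eq_zero_of_tridiag_mulVec_eq_smul [Ring R] [NoZeroDivisors R] {n : ℕ} {a b c : ℕ → R}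
    (hb : ∀ j, 1 ≤ j → j ≤ n → b j ≠ 0) {μ : R} {u : Fin (n+1) → R}
    (hu : tridiag n a b c *ᵥ u = μ • u) (h0 : u 0 = 0) : u = 0 := by
  set v : ℕ → R := fun m => if h : m < n + 1 then u ⟨m, h⟩ else 0
  have hv : (fun j : Fin (n+1) => v j) = u := funext fun j => by simp [v, Fin.is_le j]
  suffices ∀ m ≤ n, v m = 0 by rw [← hv]; exact funext fun j => this j (by omega)
  intro m
  induction m using Nat.strong_induction_on with | _ m ih => ?_
  rcases m with _ | p
  · simpa [v] using h0
  · intro hp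
    have hrow := congrFun hu ⟨p, by omega⟩
    rw [← hv, tridiag_mulVec_apply] at hrow
    have hvp : v p = 0 := ih p (by omega) (by omega)
    have hvp' : (if p = 0 then 0 else c p * v (p - 1)) = 0 := by
      split_ifs
      · rfl
      · rw [ih (p - 1) (by omega) (by omega), mul_zero]
    simp only [hvp, hvp', Pi.smul_apply, smul_zero, mul_zero, zero_add,
      if_pos (show p < n by omega)] at hrow
    exact (mul_eq_zero.mp hrow).resolve_left (hb (p + 1) (by omega) hp)

theorem mem_ker_mulVecLin_sub_smul_one_iff {n : Type*} [Fintype n] [DecidableEq n] [CommRing R]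
    (T : Matrix n n R) (μ : R) (u : n → R) :
    u ∈ LinearMap.ker ((T - μ • 1).mulVecLin) ↔ T *ᵥ u = μ • u := by
  rw [LinearMap.mem_ker, mulVecLin_apply, sub_mulVec, smul_mulVec, one_mulVec, sub_eq_zero]

theorem finrank_ker_tridiag_sub_smul_one_le_one [Field R] {n : ℕ} {a b c : ℕ → R}
    (hb : ∀ j, 1 ≤ j → j ≤ n → b j ≠ 0) (μ : R) :
    Module.finrank R (LinearMap.ker ((tridiag n a b c - μ • 1).mulVecLin)) ≤ 1 := by
  set E := LinearMap.ker ((tridiag n a b c - μ • 1).mulVecLin)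
  have hinj : Function.Injective ((LinearMap.proj 0).comp E.subtype) := by
    refine (injective_iff_map_eq_zero _).mpr fun u hu => Subtype.ext ?_
    exact eq_zero_of_tridiag_mulVec_eq_smul hb
      ((mem_ker_mulVecLin_sub_smul_one_iff _ _ _).mp u.2) hu
  simpa using LinearMap.finrank_le_finrank_of_injective hinj

theorem exists_eq_of_mulVec_eq_smul_of_injective [Field R] {n : ℕ} (T : Matrix (Fin n) (Fin n) R)
    {μs : Fin n → R} (hμs : Function.Injective μs) {vs : Fin n → Fin n → R}
    (hvs : ∀ i, vs i ≠ 0 ∧ T *ᵥ vs i = μs i • vs i) {μ : R} {v : Fin n → R} (hv : v ≠ 0)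
    (hTv : T *ᵥ v = μ • v) : ∃ i, μs i = μ := by
  by_contra! hμ
  have hinj : Function.Injective (Fin.cons μ μs : Fin (n + 1) → R) :=
    Fin.cons_injective_iff.mpr ⟨fun ⟨i, hi⟩ => hμ i hi, hμs⟩
  have heig : ∀ i, Module.End.HasEigenvector T.mulVecLin ((Fin.cons μ μs : Fin (n + 1) → R) i)
      ((Fin.cons v vs : Fin (n + 1) → Fin n → R) i) := by
    refine Fin.cases ?_ fun i => ?_ <;>
      simp only [Fin.cons_zero, Fin.cons_succ, Module.End.hasEigenvector_iff,
        Module.End.mem_eigenspace_iff, mulVecLin_apply]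
    exacts [⟨hTv, hv⟩, (hvs i).symm]
  have := (Module.End.eigenvectors_linearIndependent' _ _ hinj _ heig).fintype_card_le_finrank
  simp at this

end Matrix

open Matrix

theorem A_eq_tridiag (M : ℕ) :
    A M = tridiag M (fun i => 2 * ((i : ℝ) + 1) * ((M : ℝ) + 1 - i) - M - 2)
      (fun j => (j : ℝ) * (((j : ℝ) + 1) * ((M : ℝ) + 2 - j) - M - 2)) (fun i => (M : ℝ) + 1 - i) :=
  rfl

noncomputable def hahnOp (M : ℕ) : (ℕ → ℝ) →ₗ[ℝ] (ℕ → ℝ) where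
  toFun f x := ((x : ℝ) + 1) * ((M : ℝ) - x) * (f x - f (x + 1)) +
    (x : ℝ) * ((M : ℝ) + 1 - x) * (f x - f (x - 1))
  map_add' f g := by ext x; simp only [Pi.add_apply]; ring
  map_smul' r f := by ext x; simp only [Pi.smul_apply, smul_eq_mul, RingHom.id_apply]; ring

theorem hahnOp_choose (M s : ℕ) :
    hahnOp M (fun x => (x.choose s : ℝ)) =
      ((s : ℝ) * (s + 1)) • (fun x => (x.choose s : ℝ)) -
        ((s : ℝ) * (M + 1 - s)) • (fun x => (x.choose (s - 1) : ℝ)) := by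
  ext x
  simp only [hahnOp, LinearMap.coe_mk, AddHom.coe_mk, Pi.sub_apply, Pi.smul_apply, smul_eq_mul]
  rcases s with _ | s
  · simp
  rcases x with _ | y
  · rcases s with _ | s <;> simp [Nat.choose_eq_zero_of_lt]
  have pascal₁ := congrArg (Nat.cast (R := ℝ)) (Nat.choose_succ_succ' y s)
  have pascal₂ := congrArg (Nat.cast (R := ℝ)) (Nat.choose_succ_succ' (y + 1) s)
  have absorb₁ := congrArg (Nat.cast (R := ℝ)) (Nat.add_one_mul_choose_eq y s)
  have absorb₂ := congrArg (Nat.cast (R := ℝ)) (Nat.add_one_mul_choose_eq (y + 1) s)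
  push_cast at pascal₁ pascal₂ absorb₁ absorb₂ ⊢
  linear_combination ((y : ℝ) + 1) * (M - y) * pascal₁ +
    ((s + y + 2 - M) * (y + 2) - (s + 1) * (M - s)) * pascal₂ +
    ((s : ℝ) + y + 2 - M) * absorb₂ + ((M : ℝ) - y) * absorb₁

-- The recurrence of `(-1)^s C(k,s) C(k+s,s) / C(M,s)`, the coefficients of the Hahn polynomial
-- `₃F₂(-k, k+1, -x; 1, -M; 1)`; its denominator vanishes only at `s = M`.
noncomputable def hahnCoeff (M k : ℕ) : ℕ → ℝ
  | 0 => 1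
  | s + 1 => hahnCoeff M k s * ((s : ℝ) * (s + 1) - k * (k + 1)) / ((s + 1) * (M - s))

theorem hahnCoeff_succ_mul {M k s : ℕ} (hs : s ≤ k) (hk : k ≤ M) :
    hahnCoeff M k (s + 1) * ((s + 1) * (M - s)) =
      hahnCoeff M k s * (s * (s + 1) - k * (k + 1)) := by
  rcases hs.eq_or_lt with rfl | hs
  · simp [hahnCoeff]
  have : ((s : ℝ) + 1) * (M - s) ≠ 0 := by
    have : (s : ℝ) < M := by exact_mod_cast hs.trans_le hk
    nlinarith
  rw [hahnCoeff, div_mul_cancel₀ _ this]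

noncomputable def hahnPoly (M k : ℕ) : ℕ → ℝ :=
  ∑ s ∈ range (k + 1), hahnCoeff M k s • fun x => (x.choose s : ℝ)

theorem hahnPoly_zero (M k : ℕ) : hahnPoly M k 0 = 1 := by
  simp [hahnPoly, sum_range_succ', hahnCoeff]

theorem hahnOp_hahnPoly {M k : ℕ} (hk : k ≤ M) :
    hahnOp M (hahnPoly M k) = ((k : ℝ) * (k + 1)) • hahnPoly M k := by
  -- The recurrence of `hahnCoeff` makes `L Q - k(k+1) Q` telescope.
  set F : ℕ → ℕ → ℝ := fun s =>
    (hahnCoeff M k s * (s * (M + 1 - s))) • fun x => (x.choose (s - 1) : ℝ)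
  have step : ∀ s ∈ range (k + 1), hahnCoeff M k s • (hahnOp M (fun x => (x.choose s : ℝ)) -
      ((k : ℝ) * (k + 1)) • fun x => (x.choose s : ℝ)) = F (s + 1) - F s := by
    intro s hs
    have := hahnCoeff_succ_mul (Nat.lt_succ_iff.mp (mem_range.mp hs)) hk
    ext x
    simp only [hahnOp_choose, F, Pi.sub_apply, Pi.smul_apply, smul_eq_mul, add_tsub_cancel_right]
    push_cast
    linear_combination -(x.choose s : ℝ) * this
  rw [← sub_eq_zero]
  calc hahnOp M (hahnPoly M k) - ((k : ℝ) * (k + 1)) • hahnPoly M k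
      = ∑ s ∈ range (k + 1), hahnCoeff M k s • (hahnOp M (fun x => (x.choose s : ℝ)) -
          ((k : ℝ) * (k + 1)) • fun x => (x.choose s : ℝ)) := by
        simp only [hahnPoly, map_sum, map_smul, smul_sub, smul_sum, sum_sub_distrib, smul_smul,
          mul_comm]
    _ = F (k + 1) - F 0 := by rw [sum_congr rfl step, sum_range_sub]
    _ = 0 := by
      have hF : hahnCoeff M k (k + 1) * (((k + 1 : ℕ) : ℝ) * (M + 1 - ((k + 1 : ℕ) : ℝ))) = 0 := by
        push_cast
        linear_combination hahnCoeff_succ_mul le_rfl hk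
      simp only [F, hF, zero_smul, CharP.cast_eq_zero, zero_mul, mul_zero, sub_zero]

noncomputable def signedInvFactorial (x : ℕ) : ℝ := (-1) ^ x / x.factorial

theorem A_mulVec_signedInvFactorial (M : ℕ) (f : ℕ → ℝ) :
    A M *ᵥ (fun i : Fin (M + 1) => signedInvFactorial i * f i) =
      fun i : Fin (M + 1) => signedInvFactorial i * hahnOp M f i := by
  ext ⟨i, hi⟩
  rw [A_eq_tridiag, tridiag_mulVec_apply (v := fun x => signedInvFactorial x * f x)]
  simp only [hahnOp, LinearMap.coe_mk, AddHom.coe_mk, signedInvFactorial]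
  rcases i with _ | i
  · rcases M.eq_zero_or_pos with rfl | hM
    · simp
    · simp [hM]
      ring
  · rcases (Nat.lt_succ_iff.mp hi).lt_or_eq with h | rfl
    · simp [h, Nat.factorial_succ, pow_succ]
      field_simp
      ring
    · simp [Nat.factorial_succ, pow_succ]
      field_simp
      ring

noncomputable def hahnVec (M k : ℕ) : Fin (M + 1) → ℝ :=
  fun i => signedInvFactorial i * hahnPoly M k i

theorem hahnVec_ne_zero (M k : ℕ) : hahnVec M k ≠ 0 := fun h => by
  simpa [hahnVec, signedInvFactorial, hahnPoly_zero] using congrFun h 0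

theorem A_mulVec_hahnVec {M k : ℕ} (hk : k ≤ M) :
    A M *ᵥ hahnVec M k = ((k : ℝ) * (k + 1)) • hahnVec M k := by
  unfold hahnVec
  rw [A_mulVec_signedInvFactorial, hahnOp_hahnPoly hk]
  ext i
  simp only [Pi.smul_apply, smul_eq_mul]
  ring

theorem A_superdiag_ne_zero {M j : ℕ} (hj : 1 ≤ j) (hjM : j ≤ M) :
    (j : ℝ) * ((j + 1) * (M + 2 - j) - M - 2) ≠ 0 := by
  have hj' : (1 : ℝ) ≤ j := by exact_mod_cast hj
  have hjM' : (j : ℝ) ≤ M := by exact_mod_cast hjM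
  have : (j : ℝ) * ((j + 1) * (M + 2 - j) - M - 2) = j ^ 2 * (M + 1 - j) := by ring
  rw [this]
  exact mul_ne_zero (pow_ne_zero 2 (by linarith)) (by linarith)

/-- The eigenvalues of `A_M` are exactly `k(k+1)` for `k = 0, …, M`, and each
eigenvalue is simple: its eigenspace is one-dimensional. -/
theorem eigenvalues_A (M : ℕ) :
    (∀ μ : ℝ, (∃ v : Fin (M+1) → ℝ, v ≠ 0 ∧ (A M).mulVec v = μ • v) ↔
       ∃ k ≤ M, μ = (k : ℝ) * ((k : ℝ) + 1)) ∧
    (∀ k ≤ M, Module.finrank ℝ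
       ↥(LinearMap.ker ((A M - ((k : ℝ) * ((k : ℝ) + 1)) • 1).mulVecLin)) = 1) := by
  refine ⟨fun μ => ⟨fun ⟨v, hv, hAv⟩ => ?_, ?_⟩, fun k hk => ?_⟩
  · have hinj : Function.Injective fun k : Fin (M + 1) => (k : ℝ) * (k + 1) := by
      refine StrictMono.injective fun a b hab => ?_
      have : (a : ℝ) < b := by exact_mod_cast hab
      nlinarith [(a : ℕ).cast_nonneg (α := ℝ)]
    obtain ⟨k, rfl⟩ := exists_eq_of_mulVec_eq_smul_of_injective (A M) hinj
      (fun k => ⟨hahnVec_ne_zero M k, A_mulVec_hahnVec k.is_le⟩) hv hAv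
    exact ⟨k, k.is_le, rfl⟩
  · rintro ⟨k, hk, rfl⟩
    exact ⟨_, hahnVec_ne_zero M k, A_mulVec_hahnVec hk⟩
  · refine le_antisymm ?_ ?_
    · rw [A_eq_tridiag]
      exact finrank_ker_tridiag_sub_smul_one_le_one (fun j => A_superdiag_ne_zero) _
    refine Submodule.one_le_finrank_iff.mpr ((Submodule.ne_bot_iff _).mpr ?_)
    exact ⟨_, (mem_ker_mulVecLin_sub_smul_one_iff _ _ _).mpr (A_mulVec_hahnVec hk),
      hahnVec_ne_zero M k⟩
end

section
/- Let d_k denote the determinant of the principal (k+1)×(k+1) minor of λI - A_M consisting of rows and columns 0,...,k. Then d_k = Σ_{ℓ=0}^{k+1} c_{k,ℓ} (∏_{j=1}^{ℓ} (M - k + ℓ - j)) p_{k-ℓ}(λ), where c_{k,ℓ} = ((-1)^ℓ/ℓ!) ((k+1)!/(k+1-ℓ)!)^2, p_m(λ) = ∏_{j=0}^{m} (λ - j(j+1)) for m ≥ 0, and p_{-1}(λ) = 1. -/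
/-!
The minors `d_k` of the tridiagonal matrix `λI - A_M` satisfy the three-term (continuant)
recurrence `d_{k+1} = (λ - a_{k+1}) d_k - b_{k+1} d_{k-1}`, where `a_j` is the diagonal of `A_M`
and `b_{k+1} = (k+1)²(M-k)²` is the product of its two off-diagonal entries in row `k+1`.
The right-hand side satisfies the same recurrence: using `λ p_j = p_{j+1} + j(j+1) p_j`, this
reduces to a three-term identity between the coefficients, which are products of falling and
rising factorials. The two sides also agree for `k = -1, 0`.
-/

open Finset

/-- `d_k`: the determinant of the top-left `(k+1) × (k+1)` submatrix of `λ I - A_M`. -/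
noncomputable def d (M k : ℕ) (h : k ≤ M) (lam : ℝ) : ℝ :=
  Matrix.det ((lam • (1 : Matrix (Fin (M+1)) (Fin (M+1)) ℝ) - A M).submatrix
    (Fin.castLE (by omega : k + 1 ≤ M + 1)) (Fin.castLE (by omega : k + 1 ≤ M + 1)))

/-- `c_{k,ℓ} = ((-1)^ℓ/ℓ!) ((k+1)!/(k+1-ℓ)!)²` (here `0 ≤ ℓ ≤ k+1`). -/
noncomputable def c (k ℓ : ℕ) : ℝ :=
  (-1 : ℝ)^ℓ / (Nat.factorial ℓ) *
    ((Nat.factorial (k+1) : ℝ) / (Nat.factorial (k+1-ℓ)))^2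

/-- `p_m(λ) = ∏_{j=0}^{m}(λ - j(j+1))`; here `P n = p_{n-1}`, so `P 0 = p_{-1} = 1`. -/
noncomputable def P (n : ℕ) (lam : ℝ) : ℝ :=
  ∏ j ∈ Finset.range n, (lam - (j : ℝ) * ((j : ℝ) + 1))

section Tridiagonal

variable {R : Type*} [CommRing R]

def tridiagonal (a b c : ℕ → R) (n : ℕ) : Matrix (Fin n) (Fin n) R := fun i j =>
  if (i : ℕ) = j then a i
  else if (i : ℕ) + 1 = j then b j
  else if (j : ℕ) + 1 = i then c i
  else 0

theorem tridiagonal_apply_eq_zero {a b c : ℕ → R} {n : ℕ} {i j : Fin n}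
    (h : (i : ℕ) + 1 < j ∨ (j : ℕ) + 1 < i) : tridiagonal a b c n i j = 0 := by
  rw [tridiagonal, if_neg (by omega), if_neg (by omega), if_neg (by omega)]

theorem tridiagonal_submatrix_castLE (a b c : ℕ → R) {m n : ℕ} (h : m ≤ n) :
    (tridiagonal a b c n).submatrix (Fin.castLE h) (Fin.castLE h) = tridiagonal a b c m := by
  ext i j
  simp [tridiagonal]

theorem tridiagonal_submatrix_castSucc (a b c : ℕ → R) (n : ℕ) :
    (tridiagonal a b c (n + 1)).submatrix Fin.castSucc Fin.castSucc = tridiagonal a b c n := by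
  ext i j
  simp [tridiagonal]

theorem smul_one_sub_tridiagonal (a b c : ℕ → R) (n : ℕ) (lam : R) :
    lam • 1 - tridiagonal a b c n = tridiagonal (fun i => lam - a i) (-b) (-c) n := by
  ext i j
  by_cases hij : i = j
  · simp [hij, tridiagonal]
  · simp only [tridiagonal, Matrix.sub_apply, Matrix.smul_apply, Matrix.one_apply_ne hij,
      Fin.val_ne_of_ne hij, if_false, smul_zero, zero_sub]
    split_ifs <;> simp

theorem Matrix.det_succ_of_last_row_eq_zero {n : ℕ} (A : Matrix (Fin (n + 1)) (Fin (n + 1)) R)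
    (h : ∀ j : Fin n, A (Fin.last n) j.castSucc = 0) :
    A.det = A (Fin.last n) (Fin.last n) * (A.submatrix Fin.castSucc Fin.castSucc).det := by
  rw [Matrix.det_succ_row _ (Fin.last n), Fin.sum_univ_castSucc]
  simp [h, Fin.succAbove_last, ← two_mul]

theorem Matrix.det_succ_of_last_col_eq_zero {n : ℕ} (A : Matrix (Fin (n + 1)) (Fin (n + 1)) R)
    (h : ∀ i : Fin n, A i.castSucc (Fin.last n) = 0) :
    A.det = A (Fin.last n) (Fin.last n) * (A.submatrix Fin.castSucc Fin.castSucc).det := by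
  rw [← A.det_transpose, A.transpose.det_succ_of_last_row_eq_zero h,
    ← Matrix.transpose_submatrix, Matrix.det_transpose, Matrix.transpose_apply]

theorem det_tridiagonal_add_two (a b c : ℕ → R) (n : ℕ) :
    (tridiagonal a b c (n + 2)).det =
      a (n + 1) * (tridiagonal a b c (n + 1)).det
        - b (n + 1) * c (n + 1) * (tridiagonal a b c n).det := by
  have hminor : ((tridiagonal a b c (n + 2)).submatrix Fin.castSucc
      (Fin.last n).castSucc.succAbove).det = b (n + 1) * (tridiagonal a b c n).det := by
    rw [Matrix.det_succ_of_last_col_eq_zero]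
    · congr 1
      · simp [tridiagonal, Fin.succAbove]
      · congr 1
        ext i j
        simp [tridiagonal, Fin.succAbove]
    · exact fun i => tridiagonal_apply_eq_zero (by simp [Fin.succAbove])
  rw [Matrix.det_succ_row _ (Fin.last (n + 1)), Fin.sum_univ_castSucc, Fin.sum_univ_castSucc,
    sum_eq_zero fun j _ => by rw [tridiagonal_apply_eq_zero (by simp), mul_zero, zero_mul]]
  simp [Fin.succAbove_last, hminor, tridiagonal_submatrix_castSucc, tridiagonal,
    show n + 1 + 1 ≠ n by omega]
  ring

theorem det_tridiagonal_eq_of_recurrence (a b c s : ℕ → R) (h₀ : s 0 = 1) (h₁ : s 1 = a 0)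
    (h : ∀ n, s (n + 2) = a (n + 1) * s (n + 1) - b (n + 1) * c (n + 1) * s n) (n : ℕ) :
    (tridiagonal a b c n).det = s n := by
  induction n using Nat.twoStepInduction with
  | zero => simp [h₀]
  | one => simp [h₁, tridiagonal]
  | more n ih₀ ih₁ => rw [det_tridiagonal_add_two, ih₀, ih₁, h]

end Tridiagonal

section Pochhammer

variable {R : Type*} [CommRing R]

theorem descPochhammer_eval_add_one_succ (x : R) (n : ℕ) :
    (descPochhammer R (n + 1)).eval (x + 1) = (x + 1) * (descPochhammer R n).eval x := by
  simp [descPochhammer_succ_left]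

theorem ascPochhammer_eval_succ_left (x : R) (n : ℕ) :
    (ascPochhammer R (n + 1)).eval x = x * (ascPochhammer R n).eval (x + 1) := by
  simp [ascPochhammer_succ_left]

theorem prod_Icc_add_sub_eq_ascPochhammer_eval (ℓ : ℕ) (x : R) :
    ∏ j ∈ Icc 1 ℓ, (x + ℓ - j) = (ascPochhammer R ℓ).eval x := by
  induction ℓ generalizing x with
  | zero => simp
  | succ ℓ ih =>
    rw [prod_Icc_succ_top (by omega), ascPochhammer_eval_succ_left, ← ih (x + 1)]
    push_cast
    ring_nf

end Pochhammer

section ClosedForm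

variable (M lam : ℝ)

def diagA (x : ℝ) : ℝ := 2 * (x + 1) * (M + 1 - x) - M - 2

def superA (x : ℝ) : ℝ := x * ((x + 1) * (M + 2 - x) - M - 2)

def subA (x : ℝ) : ℝ := M + 1 - x

theorem superA_mul_subA (x : ℝ) :
    superA M (x + 1) * subA M (x + 1) = (x + 1) ^ 2 * (M - x) ^ 2 := by
  simp only [superA, subA]
  ring

noncomputable def detCoeff (x : ℝ) (ℓ : ℕ) : ℝ :=
  (-1) ^ ℓ / ℓ.factorial * (descPochhammer ℝ ℓ).eval x ^ 2 *
    (ascPochhammer ℝ ℓ).eval (M + 1 - x)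

-- Indexed by the size `n = k + 1` of the minor; summing over `ℓ + j = n` avoids the truncated
-- subtraction `k + 1 - ℓ`.
noncomputable def detClosedForm (n : ℕ) : ℝ :=
  ∑ p ∈ antidiagonal n, detCoeff M n p.1 * P p.2 lam

theorem P_succ (j : ℕ) : P (j + 1) lam = (lam - j * (j + 1)) * P j lam := by
  rw [P, prod_range_succ, mul_comm, P]

@[simp]
theorem detCoeff_zero (x : ℝ) : detCoeff M x 0 = 1 := by
  simp [detCoeff]

theorem detCoeff_succ_self (n : ℕ) : detCoeff M n (n + 1) = 0 := by
  simp [detCoeff, descPochhammer_eval_coe_nat_of_lt (Nat.lt_succ_self n)]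

theorem detCoeff_add_two_one (x : ℝ) :
    detCoeff M (x + 2) 1 = detCoeff M (x + 1) 1
      + detCoeff M (x + 1) 0 * ((x + 1) * (x + 2) - diagA M (x + 1)) := by
  simp [detCoeff, diagA]
  ring

theorem detCoeff_add_two_add_two (x : ℝ) (ℓ : ℕ) :
    detCoeff M (x + 2) (ℓ + 2) = detCoeff M (x + 1) (ℓ + 2)
      + detCoeff M (x + 1) (ℓ + 1) * ((x - ℓ) * (x - ℓ + 1) - diagA M (x + 1))
      - (x + 1) ^ 2 * (M - x) ^ 2 * detCoeff M x ℓ := by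
  set u := (descPochhammer ℝ ℓ).eval x
  set r := (ascPochhammer ℝ ℓ).eval (M + 1 - x)
  have hD₁ : (descPochhammer ℝ (ℓ + 2)).eval (x + 2) = (x + 2) * (x + 1) * u := by
    rw [show x + 2 = x + 1 + 1 by ring, descPochhammer_eval_add_one_succ,
      descPochhammer_eval_add_one_succ, mul_assoc]
  have hD₂ : (descPochhammer ℝ (ℓ + 2)).eval (x + 1) = (x + 1) * (x - ℓ) * u := by
    rw [descPochhammer_eval_add_one_succ, descPochhammer_succ_eval]
    ring
  have hD₃ : (descPochhammer ℝ (ℓ + 1)).eval (x + 1) = (x + 1) * u :=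
    descPochhammer_eval_add_one_succ x ℓ
  have hR₁ : (ascPochhammer ℝ (ℓ + 2)).eval (M + 1 - (x + 2))
      = (M - x - 1) * (M - x) * r := by
    rw [ascPochhammer_eval_succ_left, ascPochhammer_eval_succ_left,
      show M + 1 - (x + 2) + 1 + 1 = M + 1 - x by ring]
    ring
  have hR₂ : (ascPochhammer ℝ (ℓ + 2)).eval (M + 1 - (x + 1))
      = (M - x) * (M + 1 - x + ℓ) * r := by
    rw [ascPochhammer_eval_succ_left, ascPochhammer_succ_eval,
      show M + 1 - (x + 1) + 1 = M + 1 - x by ring]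
    ring
  have hR₃ : (ascPochhammer ℝ (ℓ + 1)).eval (M + 1 - (x + 1)) = (M - x) * r := by
    rw [ascPochhammer_eval_succ_left, show M + 1 - (x + 1) + 1 = M + 1 - x by ring]
    ring
  simp only [detCoeff, hD₁, hD₂, hD₃, hR₁, hR₂, hR₃, diagA, Nat.factorial_succ]
  push_cast
  field_simp
  ring

theorem detClosedForm_zero : detClosedForm M lam 0 = 1 := by
  simp [detClosedForm, P]

theorem detClosedForm_one : detClosedForm M lam 1 = lam - diagA M 0 := by
  simp [detClosedForm, Nat.sum_antidiagonal_succ, detCoeff, P, diagA]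
  ring

theorem lam_sub_diagA_mul_detClosedForm (n : ℕ) :
    (lam - diagA M (n + 1)) * detClosedForm M lam (n + 1)
      = ∑ p ∈ antidiagonal (n + 2), detCoeff M (n + 1 : ℕ) p.1 * P p.2 lam
        + ∑ p ∈ antidiagonal (n + 1),
            detCoeff M (n + 1 : ℕ) p.1 * (p.2 * (p.2 + 1) - diagA M (n + 1)) * P p.2 lam := by
  rw [Nat.sum_antidiagonal_succ', detCoeff_succ_self, zero_mul, zero_add, detClosedForm,
    mul_sum, ← sum_add_distrib]
  refine sum_congr rfl fun p _ => ?_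
  rw [P_succ]
  ring

theorem detClosedForm_add_two (n : ℕ) :
    detClosedForm M lam (n + 2) = (lam - diagA M (n + 1)) * detClosedForm M lam (n + 1)
      - (n + 1) ^ 2 * (M - n) ^ 2 * detClosedForm M lam n := by
  have htop : detClosedForm M lam (n + 2)
      - ∑ p ∈ antidiagonal (n + 2), detCoeff M (n + 1 : ℕ) p.1 * P p.2 lam
      = ∑ p ∈ antidiagonal (n + 1),
          (detCoeff M (n + 2 : ℕ) (p.1 + 1) - detCoeff M (n + 1 : ℕ) (p.1 + 1))
            * P p.2 lam := by
    rw [detClosedForm, ← sum_sub_distrib, Nat.sum_antidiagonal_succ]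
    simp only [detCoeff_zero, sub_mul, sub_self, zero_add]
  have hrest : ∑ p ∈ antidiagonal (n + 1),
        (detCoeff M (n + 2 : ℕ) (p.1 + 1) - detCoeff M (n + 1 : ℕ) (p.1 + 1)) * P p.2 lam
      - ∑ p ∈ antidiagonal (n + 1),
          detCoeff M (n + 1 : ℕ) p.1 * (p.2 * (p.2 + 1) - diagA M (n + 1)) * P p.2 lam
      = -((n + 1) ^ 2 * (M - n) ^ 2 * detClosedForm M lam n) := by
    have hstep : ∀ p ∈ antidiagonal n,
        (detCoeff M (n + 2 : ℕ) (p.1 + 1 + 1) - detCoeff M (n + 1 : ℕ) (p.1 + 1 + 1))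
            * P p.2 lam
          - detCoeff M (n + 1 : ℕ) (p.1 + 1) * (p.2 * (p.2 + 1) - diagA M (n + 1)) * P p.2 lam
        = -((n + 1) ^ 2 * (M - n) ^ 2 * (detCoeff M n p.1 * P p.2 lam)) := by
      rintro ⟨ℓ, j⟩ hp
      obtain rfl : ℓ + j = n := mem_antidiagonal.mp hp
      push_cast
      linear_combination P j lam * detCoeff_add_two_add_two M (ℓ + j) ℓ
    rw [← sum_sub_distrib, Nat.sum_antidiagonal_succ, detClosedForm, mul_sum, ← sum_neg_distrib]
    dsimp only
    rw [sum_congr rfl hstep]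
    have hbottom := detCoeff_add_two_one M n
    push_cast at hbottom ⊢
    linear_combination P (n + 1) lam * hbottom
  linear_combination htop - lam_sub_diagA_mul_detClosedForm M lam n + hrest

end ClosedForm

theorem A_eq_tridiagonal (M : ℕ) :
    A M = tridiagonal (fun i => diagA M i) (fun j => superA M j) (fun i => subA M i) (M + 1) := by
  ext i j
  simp [A, tridiagonal, diagA, superA, subA]

theorem c_mul_prod_Icc_eq_detCoeff (M : ℝ) {k ℓ : ℕ} (hℓ : ℓ ≤ k + 1) :
    c k ℓ * ∏ j ∈ Icc 1 ℓ, (M - k + ℓ - j) = detCoeff M (k + 1 : ℕ) ℓ := by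
  have hfac : ((k + 1).factorial : ℝ) / (k + 1 - ℓ).factorial = (k + 1).descFactorial ℓ := by
    rw [← Nat.factorial_mul_descFactorial hℓ]
    push_cast
    field_simp
  rw [c, detCoeff, prod_Icc_add_sub_eq_ascPochhammer_eval, hfac,
    descPochhammer_eval_eq_descFactorial,
    show M + 1 - ((k + 1 : ℕ) : ℝ) = M - k by push_cast; ring]

/-- `d_k = Σ_{ℓ=0}^{k+1} c_{k,ℓ} (∏_{j=1}^{ℓ} (M - k + ℓ - j)) p_{k-ℓ}(λ)`. -/
theorem minor_det_formula (M k : ℕ) (h : k ≤ M) (lam : ℝ) :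
    d M k h lam = ∑ ℓ ∈ Finset.range (k+2),
      c k ℓ * (∏ j ∈ Finset.Icc 1 ℓ, ((M : ℝ) - (k : ℝ) + (ℓ : ℝ) - (j : ℝ)))
        * P (k+1-ℓ) lam := by
  have hrec (n : ℕ) : detClosedForm M lam (n + 2)
      = (lam - diagA M (n + 1 : ℕ)) * detClosedForm M lam (n + 1)
        - -superA M (n + 1 : ℕ) * -subA M (n + 1 : ℕ) * detClosedForm M lam n := by
    push_cast
    rw [neg_mul_neg, superA_mul_subA, detClosedForm_add_two]
  rw [d, A_eq_tridiagonal, smul_one_sub_tridiagonal, tridiagonal_submatrix_castLE,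
    det_tridiagonal_eq_of_recurrence _ _ _ _ (detClosedForm_zero M lam)
      (by simpa using detClosedForm_one M lam) hrec,
    detClosedForm, Nat.sum_antidiagonal_eq_sum_range_succ (fun ℓ j => detCoeff M _ ℓ * P j lam)]
  refine sum_congr rfl fun ℓ hℓ => ?_
  rw [c_mul_prod_Icc_eq_detCoeff _ (Nat.lt_succ_iff.mp (mem_range.mp hℓ))]
end

section
/- For every nonnegative integer M, det(A_M) = 0, i.e., 0 is an eigenvalue of A_M and A_M is singular. -/
/-- The null vector components. -/
noncomputable def w : ℕ → ℝ := fun k => (-1)^k / (Nat.factorial k)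

lemma fact_ne (k : ℕ) : ((Nat.factorial k : ℝ)) ≠ 0 := by
  exact_mod_cast Nat.factorial_ne_zero k

lemma w_succ (k : ℕ) : w (k+1) = -w k / (k+1) := by
  have h1 : ((Nat.factorial k : ℝ)) ≠ 0 := fact_ne k
  have h2 : ((k:ℝ)+1) ≠ 0 := by positivity
  simp only [w, Nat.factorial_succ, pow_succ]
  push_cast
  field_simp

lemma row_zero (M : ℕ) (i : Fin (M+1)) :
    ∑ j, A M i j * w (j:ℕ) = 0 := by
  have hnM : (i:ℕ) ≤ M := Nat.lt_succ_iff.mp i.isLt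
  set n := (i : ℕ) with hn
  have hstep : ∀ j : Fin (M+1), A M i j * w (j:ℕ) =
      (if n = (j:ℕ) then (2*((n:ℝ)+1)*((M:ℝ)+1-(n:ℝ)) - M - 2) * w n else 0)
      + (if n + 1 = (j:ℕ) then
          (((n:ℝ)+1)*((((n:ℝ)+1)+1)*((M:ℝ)+2-((n:ℝ)+1)) - M - 2)) * w (n+1) else 0)
      + (if (j:ℕ) + 1 = n then ((M:ℝ)+1-(n:ℝ)) * w (n-1) else 0) := by
    intro j
    unfold A
    rw [← hn]
    rcases eq_or_ne n (j:ℕ) with h1 | h1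
    · have h2 : ¬ (n + 1 = (j:ℕ)) := by omega
      have h3 : ¬ ((j:ℕ) + 1 = n) := by omega
      simp only [if_pos h1, if_neg h2, if_neg h3]
      rw [← h1]; ring
    · rcases eq_or_ne (n+1) ((j:ℕ)) with h2 | h2
      · have h3 : ¬ ((j:ℕ) + 1 = n) := by omega
        simp only [if_neg h1, if_pos h2, if_neg h3]
        rw [← h2]; push_cast; ring
      · rcases eq_or_ne ((j:ℕ)+1) n with h3 | h3
        · simp only [if_neg h1, if_neg h2, if_pos h3]
          have hj : (j:ℕ) = n - 1 := by omega
          rw [hj]; ring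
        · simp only [if_neg h1, if_neg h2, if_neg h3]
          ring
  rw [Finset.sum_congr rfl (fun j _ => hstep j)]
  rw [Finset.sum_add_distrib, Finset.sum_add_distrib]
  have e1 : ∀ j : Fin (M+1), (n = (j:ℕ)) ↔ j = (⟨n, by omega⟩ : Fin (M+1)) := by
    intro j; simp only [Fin.ext_iff, Fin.val_mk]; omega
  have S1 : (∑ j : Fin (M+1), if n = (j:ℕ) then
      (2*((n:ℝ)+1)*((M:ℝ)+1-(n:ℝ)) - M - 2) * w n else 0)
      = (2*((n:ℝ)+1)*((M:ℝ)+1-(n:ℝ)) - M - 2) * w n := by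
    simp_rw [e1]; simp
  rw [S1]
  rcases Nat.eq_or_lt_of_le hnM with hM | hM
  · -- n = M : the superdiagonal term is absent
    have S2 : (∑ j : Fin (M+1), if n + 1 = (j:ℕ) then
        (((n:ℝ)+1)*((((n:ℝ)+1)+1)*((M:ℝ)+2-((n:ℝ)+1)) - M - 2)) * w (n+1) else 0) = 0 := by
      apply Finset.sum_eq_zero
      intro j _
      have : ¬ (n + 1 = (j:ℕ)) := by have := j.isLt; omega
      simp [this]
    rw [S2]
    rcases Nat.eq_zero_or_pos n with h0 | h0
    · -- n = 0 = M
      have S3 : (∑ j : Fin (M+1), if (j:ℕ) + 1 = n then ((M:ℝ)+1-(n:ℝ)) * w (n-1) else 0) = 0 := by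
        apply Finset.sum_eq_zero
        intro j _
        have : ¬ ((j:ℕ) + 1 = n) := by omega
        simp [this]
      rw [S3]
      have hM0 : M = 0 := by omega
      rw [h0, hM0]; norm_num [w]
    · obtain ⟨m, hm⟩ : ∃ m, n = m + 1 := ⟨n - 1, by omega⟩
      have e3 : ∀ j : Fin (M+1), ((j:ℕ) + 1 = n) ↔ j = (⟨m, by omega⟩ : Fin (M+1)) := by
        intro j; simp only [Fin.ext_iff, Fin.val_mk]; omega
      have S3 : (∑ j : Fin (M+1), if (j:ℕ) + 1 = n then ((M:ℝ)+1-(n:ℝ)) * w (n-1) else 0)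
          = ((M:ℝ)+1-(n:ℝ)) * w (n-1) := by
        simp_rw [e3]; simp
      rw [S3]
      have hn1 : n - 1 = m := by omega
      rw [hn1, hm, ← hM, hm]
      rw [w_succ m]
      have h2 : ((m:ℝ)+1) ≠ 0 := by positivity
      push_cast
      field_simp
      ring
  · -- n < M : superdiagonal present
    have e2 : ∀ j : Fin (M+1), (n + 1 = (j:ℕ)) ↔ j = (⟨n+1, by omega⟩ : Fin (M+1)) := by
      intro j; simp only [Fin.ext_iff, Fin.val_mk]; omega
    have S2 : (∑ j : Fin (M+1), if n + 1 = (j:ℕ) then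
        (((n:ℝ)+1)*((((n:ℝ)+1)+1)*((M:ℝ)+2-((n:ℝ)+1)) - M - 2)) * w (n+1) else 0)
        = (((n:ℝ)+1)*((((n:ℝ)+1)+1)*((M:ℝ)+2-((n:ℝ)+1)) - M - 2)) * w (n+1) := by
      simp_rw [e2]; simp
    rw [S2]
    rcases Nat.eq_zero_or_pos n with h0 | h0
    · have S3 : (∑ j : Fin (M+1), if (j:ℕ) + 1 = n then ((M:ℝ)+1-(n:ℝ)) * w (n-1) else 0) = 0 := by
        apply Finset.sum_eq_zero
        intro j _
        have : ¬ ((j:ℕ) + 1 = n) := by omega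
        simp [this]
      rw [S3, h0, w_succ 0]
      have hw0 : w 0 = 1 := by simp [w]
      rw [hw0]
      push_cast
      ring
    · obtain ⟨m, hm⟩ : ∃ m, n = m + 1 := ⟨n - 1, by omega⟩
      have e3 : ∀ j : Fin (M+1), ((j:ℕ) + 1 = n) ↔ j = (⟨m, by omega⟩ : Fin (M+1)) := by
        intro j; simp only [Fin.ext_iff, Fin.val_mk]; omega
      have S3 : (∑ j : Fin (M+1), if (j:ℕ) + 1 = n then ((M:ℝ)+1-(n:ℝ)) * w (n-1) else 0)
          = ((M:ℝ)+1-(n:ℝ)) * w (n-1) := by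
        simp_rw [e3]; simp
      rw [S3]
      have hn1 : n - 1 = m := by omega
      rw [hn1, hm, w_succ (m+1), w_succ m]
      have h2 : ((m:ℝ)+1) ≠ 0 := by positivity
      have h3 : ((m:ℝ)+1+1) ≠ 0 := by positivity
      push_cast
      field_simp
      ring

/-- `A_M` is singular: `det A_M = 0`, i.e. `0` is an eigenvalue of `A_M`. -/
theorem det_A_eq_zero (M : ℕ) :
    (A M).det = 0 ∧ ∃ v : Fin (M+1) → ℝ, v ≠ 0 ∧ (A M).mulVec v = 0 := by
  set v : Fin (M+1) → ℝ := fun k => w (k:ℕ) with hv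
  have hmv : (A M).mulVec v = 0 := by
    funext i
    simp only [Matrix.mulVec, dotProduct, hv, Pi.zero_apply]
    exact row_zero M i
  have hne : v ≠ 0 := by
    intro h
    have := congrFun h 0
    simp [hv, w] at this
  exact ⟨Matrix.exists_mulVec_eq_zero_iff.mp ⟨v, hne, hmv⟩, v, hne, hmv⟩
end

section
/- For each nonnegative integer M and each eigenvalue k(k+1) of A_M (0 ≤ k ≤ M), the eigenvector α of A_M with eigenvalue k(k+1) normalized so that α_M = 1 has α_0 = (-1)^{M-k} M!; in particular in the recorded cases M ≤ 4 the first component is ± M!. -/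
open Matrix Finset

theorem Matrix.eq_of_upperHessenberg_of_last_eq {R : Type*} [Ring R] [NoZeroDivisors R]
    {n : ℕ} {N : Matrix (Fin (n + 1)) (Fin (n + 1)) R}
    (hN : ∀ i j : Fin (n + 1), (j : ℕ) + 1 < i → N i j = 0)
    (hsub : ∀ j : Fin n, N j.succ j.castSucc ≠ 0) {μ : R} {v w : Fin (n + 1) → R}
    (hv : ∀ j : Fin n, (N *ᵥ v) j.succ = μ * v j.succ)
    (hw : ∀ j : Fin n, (N *ᵥ w) j.succ = μ * w j.succ)
    (hlast : v (Fin.last n) = w (Fin.last n)) : v = w := by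
  suffices h : ∀ i : Fin (n + 1), ∀ l, i ≤ l → v l = w l from funext fun l ↦ h l l le_rfl
  intro i
  induction i using Fin.reverseInduction with
  | last => intro l hl; rwa [Fin.last_le_iff.mp hl]
  | cast i ih =>
    intro l hl
    rcases hl.eq_or_lt with rfl | hlt
    · have hrow : ∑ l, N i.succ l * (v l - w l) = 0 := by
        have hvi := hv i
        have hwi := hw i
        simp only [mulVec, dotProduct] at hvi hwi
        simp only [mul_sub, sum_sub_distrib, hvi, hwi, ih i.succ le_rfl, sub_self]
      rw [sum_eq_single i.castSucc] at hrow
      · exact sub_eq_zero.mp ((mul_eq_zero.mp hrow).resolve_left (hsub i))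
      · intro l _ hl
        rcases lt_or_gt_of_ne hl with h | h
        · rw [hN _ _ (by simpa [Fin.lt_def] using h), zero_mul]
        · rw [ih l (Fin.castSucc_lt_iff_succ_le.mp h), sub_self, mul_zero]
      · simp
    · exact ih l (Fin.castSucc_lt_iff_succ_le.mp hlt)

-- Extending `Nat.choose` by zero to negative lower indices makes its two contiguity relations below
-- hold for every integer `t`, so that `eigenTerm_recurrence` needs no case split.
noncomputable def intChoose (m : ℕ) (t : ℤ) : ℝ := if 0 ≤ t then (m.choose t.toNat : ℝ) else 0

@[simp] lemma intChoose_natCast (m n : ℕ) : intChoose m n = m.choose n := by simp [intChoose]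

lemma intChoose_of_neg {m : ℕ} {t : ℤ} (ht : t < 0) : intChoose m t = 0 := by
  simp [intChoose, not_le.mpr ht]

lemma intChoose_of_lt {m : ℕ} {t : ℤ} (ht : m < t) : intChoose m t = 0 := by
  lift t to ℕ using by omega
  simp [Nat.choose_eq_zero_of_lt (by omega : m < t)]

lemma intChoose_succ_mul (m : ℕ) (t : ℤ) :
    intChoose m (t + 1) * (t + 1) = intChoose m t * (m - t) := by
  rcases lt_trichotomy t (-1) with ht | rfl | ht
  · rw [intChoose_of_neg (by omega), intChoose_of_neg (by omega)]; ring
  · simp [intChoose_of_neg]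
  · lift t to ℕ using by omega
    rw [← Nat.cast_succ, intChoose_natCast, intChoose_natCast]
    rcases le_or_gt t m with htm | htm
    · have := congrArg (Nat.cast : ℕ → ℝ) (Nat.choose_succ_right_eq m t)
      push_cast [Nat.cast_sub htm] at this
      exact_mod_cast this
    · simp [Nat.choose_eq_zero_of_lt htm, Nat.choose_eq_zero_of_lt (by omega : m < t + 1)]

lemma intChoose_succ_succ (m : ℕ) (t : ℤ) :
    intChoose (m + 1) (t + 1) = intChoose m t + intChoose m (t + 1) := by
  rcases lt_trichotomy t (-1) with ht | rfl | ht
  · rw [intChoose_of_neg (by omega), intChoose_of_neg (by omega), intChoose_of_neg (by omega)]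
    ring
  · simp [intChoose]
  · lift t to ℕ using by omega
    rw [← Nat.cast_succ, intChoose_natCast, intChoose_natCast, intChoose_natCast]
    exact_mod_cast Nat.choose_succ_succ m t

noncomputable def eigenTerm (k m i j : ℕ) : ℝ :=
  (-1) ^ (m + i + j) * (k.choose j : ℝ) ^ 2 * intChoose m ((i : ℤ) - j)

noncomputable def eigenCert (k m i j : ℕ) : ℝ :=
  (-1) ^ (m + i + j) * (j : ℝ) ^ 2 * (k.choose j : ℝ) ^ 2 * intChoose (m + 1) ((i : ℤ) + 2 - j)

lemma eigenTerm_recurrence (k m i j : ℕ) (hj : j ≤ k) :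
    ((k + m : ℝ) - i) ^ 2 * eigenTerm k m i j
      + (2 * ((i : ℝ) + 2) * ((k + m : ℝ) - i) - (k + m) - 2 - k * (k + 1)) * eigenTerm k m (i + 1) j
      + ((i : ℝ) + 2) ^ 2 * eigenTerm k m (i + 2) j
    = eigenCert k m i j - eigenCert k m i (j + 1) := by
  have hy : (k.choose (j + 1) : ℝ) * (j + 1) = k.choose j * (k - j) := by
    have h := congrArg (Nat.cast : ℕ → ℝ) (Nat.choose_succ_right_eq k j)
    push_cast [Nat.cast_sub hj] at h
    exact h
  have r1 := intChoose_succ_mul m (i - j)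
  have r2 := intChoose_succ_mul m (i - j + 1)
  have p1 := intChoose_succ_succ m (i - j)
  have p2 := intChoose_succ_succ m (i - j + 1)
  simp only [eigenTerm, eigenCert]
  rw [show ((i + 1 : ℕ) : ℤ) - j = i - j + 1 by push_cast; ring,
    show ((i + 2 : ℕ) : ℤ) - j = i - j + 1 + 1 by push_cast; ring,
    show (i : ℤ) + 2 - j = i - j + 1 + 1 by ring,
    show (i : ℤ) + 2 - ((j + 1 : ℕ) : ℤ) = i - j + 1 by push_cast; ring]
  push_cast at r1 r2 ⊢
  linear_combination (-1 : ℝ) ^ (m + i + j) * (k.choose j : ℝ) ^ 2 *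
      (-(2 * ((k : ℝ) - j) + m - (i - j)) * r1 + (2 * j + (i - j) + 2) * r2
        - (j : ℝ) ^ 2 * p2 - ((k : ℝ) - j) ^ 2 * p1)
    - (-1 : ℝ) ^ (m + i + j) * intChoose (m + 1) (i - j + 1)
      * (k.choose j * ((k : ℝ) - j) + k.choose (j + 1) * (j + 1)) * hy

-- `(-1)^m` times the coefficient of `x^i` in `(1 - x)^m * ∑ j, C(k,j)^2 * x^j`.
noncomputable def eigenCoeff (k m i : ℕ) : ℝ := ∑ j ∈ range (k + 1), eigenTerm k m i j

lemma eigenCoeff_recurrence (k m i : ℕ) :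
    ((k + m : ℝ) - i) ^ 2 * eigenCoeff k m i
      + (2 * ((i : ℝ) + 2) * ((k + m : ℝ) - i) - (k + m) - 2 - k * (k + 1)) * eigenCoeff k m (i + 1)
      + ((i : ℝ) + 2) ^ 2 * eigenCoeff k m (i + 2) = 0 := by
  simp only [eigenCoeff, mul_sum, ← sum_add_distrib]
  rw [sum_congr rfl fun j hj ↦ eigenTerm_recurrence k m i j (Nat.lt_succ_iff.mp (mem_range.mp hj)),
    sum_range_sub']
  simp [eigenCert]

lemma eigenCoeff_of_lt {k m i : ℕ} (hi : k + m < i) : eigenCoeff k m i = 0 :=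
  sum_eq_zero fun j hj ↦ by
    simp [eigenTerm, intChoose_of_lt (show (m : ℤ) < i - j by have := mem_range.mp hj; omega)]

lemma eigenCoeff_self (k m : ℕ) : eigenCoeff k m (k + m) = 1 := by
  rw [eigenCoeff, sum_range_succ, sum_eq_zero fun j hj ↦ ?_]
  · simp [eigenTerm, (Even.neg_one_pow ⟨m + k, by ring⟩ : (-1 : ℝ) ^ (m + (k + m) + k) = 1)]
  · rw [eigenTerm, intChoose_of_lt (by have := mem_range.mp hj; omega), mul_zero]

lemma eigenCoeff_zero (k m : ℕ) : eigenCoeff k m 0 = (-1) ^ m := by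
  rw [eigenCoeff, sum_range_succ', sum_eq_zero fun j _ ↦ ?_]
  · simp [eigenTerm, intChoose]
  · rw [eigenTerm, intChoose_of_neg (by omega), mul_zero]

lemma A_apply_of_lt (M : ℕ) {i j : Fin (M + 1)} (h : (j : ℕ) + 1 < i) : A M i j = 0 := by
  simp only [A]
  rw [if_neg (by omega), if_neg (by omega), if_neg (by omega)]

lemma A_succ_castSucc (M : ℕ) (j : Fin M) : A M j.succ j.castSucc = M - j := by
  simp only [A, Fin.val_succ, Fin.val_castSucc]
  split_ifs <;> first | omega | (push_cast; ring)

lemma A_mulVec_succ (M : ℕ) (v : ℕ → ℝ) {i : ℕ} (hi : i + 1 < M + 1) :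
    (A M *ᵥ fun l ↦ v l) ⟨i + 1, hi⟩
      = ((M : ℝ) - i) * v i + (2 * ((i : ℝ) + 2) * ((M : ℝ) - i) - M - 2) * v (i + 1)
        + ((i : ℝ) + 2) ^ 2 * ((M : ℝ) - i - 1) * v (i + 2) := by
  calc (A M *ᵥ fun l ↦ v l) ⟨i + 1, hi⟩
      = ∑ l ∈ range (M + 1), ((if l = i then ((M : ℝ) - i) * v i else 0)
          + (if l = i + 1 then (2 * ((i : ℝ) + 2) * ((M : ℝ) - i) - M - 2) * v (i + 1) else 0)
          + (if l = i + 2 then ((i : ℝ) + 2) ^ 2 * ((M : ℝ) - i - 1) * v (i + 2) else 0)) := by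
        refine (Fintype.sum_congr _ _ fun l ↦ ?_).trans (Finset.sum_range _).symm
        obtain ⟨l, hl⟩ := l
        simp only [A]
        split_ifs <;> first | omega | (subst_vars; push_cast; ring)
    _ = _ := by
        simp only [sum_add_distrib, sum_ite_eq', mem_range]
        rw [if_pos (by omega), if_pos hi]
        split_ifs with h
        · rfl
        · obtain rfl : M = i + 1 := by omega
          push_cast
          ring

lemma cast_factorial_sub {R : Type*} [CommRing R] {n i : ℕ} (h : i < n) :
    ((n - i).factorial : R) = ((n : R) - i) * (n - (i + 1)).factorial := by
  rw [show n - i = n - (i + 1) + 1 by omega, Nat.factorial_succ]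
  push_cast [Nat.cast_sub h]
  ring

noncomputable def eigenVec (k m l : ℕ) : ℝ := ((k + m - l).factorial : ℝ) * eigenCoeff k m l

lemma A_mulVec_eigenVec (k m : ℕ) (j : Fin (k + m)) :
    (A (k + m) *ᵥ fun l ↦ eigenVec k m l) j.succ = (k * (k + 1)) * eigenVec k m j.succ := by
  obtain ⟨i, hi⟩ := j
  have hrec := eigenCoeff_recurrence k m i
  rw [show Fin.succ ⟨i, hi⟩ = ⟨i + 1, by omega⟩ from rfl, A_mulVec_succ]
  simp only [eigenVec]
  obtain hi2 | hi1 : i + 2 ≤ k + m ∨ i + 1 = k + m := by omega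
  · rw [cast_factorial_sub (show i < k + m by omega),
      cast_factorial_sub (show i + 1 < k + m by omega)]
    push_cast
    linear_combination ((k + m - (i + 2)).factorial : ℝ) * ((k : ℝ) + m - i - 1) * hrec
  · -- In the last row `(k + m - i - 1) * (k + m - i - 2)!` is `0` rather than `0! = 1`;
    -- this is compensated by `eigenCoeff` vanishing beyond `k + m`.
    have hk : (k : ℝ) = i + 1 - m := by
      rw [eq_sub_iff_add_eq]
      exact_mod_cast hi1.symm
    rw [eigenCoeff_of_lt (i := i + 2) (by omega)] at hrec ⊢
    rw [show k + m - i = 1 by omega, show k + m - (i + 1) = 0 by omega]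
    push_cast
    rw [hk] at hrec ⊢
    linear_combination hrec

/-- For each `0 ≤ k ≤ M`, the eigenvector `α` of `A_M` with eigenvalue `k(k+1)`
normalized so that `α_M = 1` has `α_0 = (-1)^{M-k} M!`. -/
theorem eigenvector_first_component (M k : ℕ) (hk : k ≤ M)
    (α : Fin (M+1) → ℝ)
    (heig : (A M).mulVec α = ((k : ℝ) * ((k : ℝ) + 1)) • α)
    (hnorm : α ⟨M, by omega⟩ = 1) :
    α ⟨0, by omega⟩ = (-1 : ℝ)^(M - k) * (Nat.factorial M : ℝ) := by
  obtain ⟨m, rfl⟩ : ∃ m, M = k + m := ⟨M - k, by omega⟩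
  have hα : α = fun l : Fin (k + m + 1) ↦ eigenVec k m l :=
    Matrix.eq_of_upperHessenberg_of_last_eq (fun _ _ ↦ A_apply_of_lt _)
      (fun j ↦ by rw [A_succ_castSucc]; exact sub_ne_zero.mpr (by exact_mod_cast j.isLt.ne'))
      (fun j ↦ by rw [heig, Pi.smul_apply, smul_eq_mul]) (A_mulVec_eigenVec k m)
      (hnorm.trans (by simp [eigenVec, eigenCoeff_self]))
  rw [hα]
  simp [eigenVec, eigenCoeff_zero]
  ring
end
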